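/- arXiv:2304.04944 — 3 statements merged into one kernel-verified Lean document; each statement's English description precedes it below -/
import Mathlib

section
/- Let b ∈ {2,3,…} be an integer, α ∈ (0,1), and let φ : [0,1] → ℝ be Hölder continuous with exponent γ ∈ (0,1] and satisfy φ(0) = φ(1). Set K := min(1, −log α / log b) and define f(t) := ∑_{n=0}^∞ αⁿ φ(⟨bⁿ t⟩) for t ∈ [0,1]. If K = γ, then there exists a constant c > 0 such that |f(t) − f(s)| ≤ c·|t − s|^γ · log(1/|t − s|) for all s, t ∈ [0,1] with 0 < |t − s| ≤ 1/2. In particular, f is Hölder continuous on [0,1] with exponent β for every β < γ. -/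
/-!
Extend `φ` periodically as `g = φ ∘ Int.fract`: because `φ 0 = φ 1`, `g` is `γ`-Hölder on all
of `ℝ` (with constant `2 C`) and bounded, so `f = ∑ αⁿ g(bⁿ ·)`. Split `f t - f s` after `N`
terms. The `n`-th early term is at most `2 C (α b^γ)ⁿ |t - s|^γ ≤ 2 C |t - s|^γ`, since `K = γ`
gives `α b^γ ≤ 1`; the tail is `O(α^N)`. Taking `N = ⌈log_b (1 / |t - s|)⌉` makes
`α^N ≤ |t - s|^γ` and `N = O(log (1 / |t - s|))`. For `β < γ`, the factor `log (1 / x)` is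
absorbed through `x^(γ - β) log (1 / x) ≤ 1 / (γ - β)`.
-/

open Set

section PeriodicExtension

variable {φ : ℝ → ℝ} {C γ : ℝ}

lemma abs_sub_le_of_holder_unitInterval (hC : 0 ≤ C) (hγ : 0 ≤ γ)
    (hφ : ∀ x ∈ Icc (0 : ℝ) 1, ∀ y ∈ Icc (0 : ℝ) 1, |φ x - φ y| ≤ C * |x - y| ^ γ)
    {u v : ℝ} (hu : u ∈ Icc (0 : ℝ) 1) (hv : v ∈ Icc (0 : ℝ) 1) : |φ u - φ v| ≤ C :=
  (hφ u hu v hv).trans <| mul_le_of_le_one_right hC <| Real.rpow_le_one (abs_nonneg _)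
    (abs_sub_le_iff.2 ⟨by linarith [hu.2, hv.1], by linarith [hu.1, hv.2]⟩) hγ

lemma abs_comp_fract_le (hC : 0 ≤ C) (hγ : 0 ≤ γ)
    (hφ : ∀ x ∈ Icc (0 : ℝ) 1, ∀ y ∈ Icc (0 : ℝ) 1, |φ x - φ y| ≤ C * |x - y| ^ γ) (x : ℝ) :
    |(φ ∘ Int.fract) x| ≤ |φ 0| + C := by
  have hx := abs_sub_le_of_holder_unitInterval hC hγ hφ (unitInterval.fract_mem x)
    unitInterval.zero_mem
  show |φ (Int.fract x)| ≤ _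
  linarith [abs_sub_abs_le_abs_sub (φ (Int.fract x)) (φ 0)]

/-- Since `φ 0 = φ 1`, a step of length `d < 1` that crosses an integer is split there into two
steps of length at most `d` inside `[0, 1]`. -/
lemma abs_comp_fract_sub_le_of_le (hC : 0 ≤ C) (hγ : 0 < γ)
    (hφ : ∀ x ∈ Icc (0 : ℝ) 1, ∀ y ∈ Icc (0 : ℝ) 1, |φ x - φ y| ≤ C * |x - y| ^ γ)
    (h01 : φ 0 = φ 1) {x y : ℝ} (hxy : x ≤ y) :
    |φ (Int.fract x) - φ (Int.fract y)| ≤ 2 * C * |x - y| ^ γ := by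
  set u := Int.fract x
  set d := y - x
  have hxy_abs : |x - y| = d := by rw [abs_sub_comm, abs_of_nonneg (sub_nonneg.2 hxy)]
  rw [hxy_abs]
  have hu := unitInterval.fract_mem x
  have hu1 : u < 1 := Int.fract_lt_one x
  rcases le_or_gt 1 d with hd1 | hd1
  · calc |φ u - φ (Int.fract y)| ≤ C :=
          abs_sub_le_of_holder_unitInterval hC hγ.le hφ hu (unitInterval.fract_mem y)
      _ ≤ 2 * C * d ^ γ := by nlinarith [Real.one_le_rpow hd1 hγ.le]
  have hy : y - (u + d) = ⌊x⌋ := by simp only [u, d, Int.fract]; ring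
  rcases lt_or_ge (u + d) 1 with hwrap | hwrap
  · have hv : Int.fract y = u + d :=
      Int.fract_eq_iff.2 ⟨by linarith [hu.1, sub_nonneg.2 hxy], hwrap, ⌊x⌋, hy⟩
    rw [hv]
    calc |φ u - φ (u + d)| ≤ C * |u - (u + d)| ^ γ := hφ _ hu _ (hv ▸ unitInterval.fract_mem y)
      _ = C * d ^ γ := by rw [sub_add_cancel_left, abs_neg, abs_of_nonneg (by linarith)]
      _ ≤ 2 * C * d ^ γ := by nlinarith [Real.rpow_nonneg (by linarith : 0 ≤ d) γ]
  · have hv : Int.fract y = u + d - 1 :=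
      Int.fract_eq_iff.2 ⟨by linarith, by linarith, ⌊x⌋ + 1, by push_cast; linarith⟩
    have hv' := hv ▸ unitInterval.fract_mem y
    calc |φ u - φ (Int.fract y)| ≤ |φ u - φ 1| + |φ 0 - φ (u + d - 1)| := by
          rw [hv, h01]; exact abs_sub_le _ _ _
      _ ≤ C * |u - 1| ^ γ + C * |0 - (u + d - 1)| ^ γ :=
          add_le_add (hφ _ hu _ unitInterval.one_mem) (hφ _ unitInterval.zero_mem _ hv')
      _ ≤ C * d ^ γ + C * d ^ γ := by
          gcongr
          · rw [abs_sub_comm, abs_of_nonneg (by linarith)]; linarith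
          · rw [zero_sub, abs_neg, abs_of_nonneg hv'.1]; linarith
      _ = 2 * C * d ^ γ := by ring

lemma abs_comp_fract_sub_le (hC : 0 ≤ C) (hγ : 0 < γ)
    (hφ : ∀ x ∈ Icc (0 : ℝ) 1, ∀ y ∈ Icc (0 : ℝ) 1, |φ x - φ y| ≤ C * |x - y| ^ γ)
    (h01 : φ 0 = φ 1) (x y : ℝ) :
    |(φ ∘ Int.fract) x - (φ ∘ Int.fract) y| ≤ 2 * C * |x - y| ^ γ := by
  rcases le_total x y with hxy | hyx
  · exact abs_comp_fract_sub_le_of_le hC hγ hφ h01 hxy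
  · rw [abs_sub_comm, abs_sub_comm x]
    exact abs_comp_fract_sub_le_of_le hC hγ hφ h01 hyx

end PeriodicExtension

lemma abs_tsum_le_of_le_of_le_geometric {d : ℕ → ℝ} {A B α : ℝ} (hα0 : 0 ≤ α) (hα1 : α < 1)
    (hA : ∀ n, |d n| ≤ A) (hB : ∀ n, |d n| ≤ B * α ^ n) (N : ℕ) :
    |∑' n, d n| ≤ N * A + B * α ^ N / (1 - α) := by
  have hgeo := hasSum_geometric_of_lt_one hα0 hα1
  rw [← (Summable.of_norm_bounded (hgeo.summable.mul_left B) hB).sum_add_tsum_nat_add N]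
  have head : |∑ n ∈ Finset.range N, d n| ≤ N * A :=
    calc |∑ n ∈ Finset.range N, d n| ≤ ∑ n ∈ Finset.range N, |d n| :=
          Finset.abs_sum_le_sum_abs _ _
      _ ≤ ∑ _n ∈ Finset.range N, A := Finset.sum_le_sum fun n _ => hA n
      _ = N * A := by simp
  have tail : |∑' n, d (n + N)| ≤ B * α ^ N / (1 - α) := by
    rw [div_eq_mul_inv]
    exact tsum_of_norm_bounded (f := fun n => d (n + N)) (hgeo.mul_left (B * α ^ N))
      fun n => (hB (n + N)).trans_eq (show B * α ^ (n + N) = B * α ^ N * α ^ n by ring)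
  exact (abs_add_le _ _).trans (add_le_add head tail)

lemma mul_rpow_le_one_of_le_neg_log_div_log {α b γ : ℝ} (hα : 0 < α) (hb : 1 < b)
    (hγ : γ ≤ -Real.log α / Real.log b) : α * b ^ γ ≤ 1 :=
  calc α * b ^ γ ≤ α * b ^ (-Real.log α / Real.log b) := by
        gcongr; exact hb.le
    _ = 1 := by
        rw [Real.rpow_def_of_pos (by linarith), mul_div_cancel₀ _ (Real.log_pos hb).ne',
          Real.exp_neg, Real.exp_log hα, mul_inv_cancel₀ hα.ne']

lemma pow_mul_rpow_pow_le_one {α b γ : ℝ} (hα : 0 ≤ α) (hb : 0 ≤ b) (hαb : α * b ^ γ ≤ 1)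
    (n : ℕ) : α ^ n * (b ^ n) ^ γ ≤ 1 := by
  rw [← Real.rpow_pow_comm hb, ← mul_pow]
  exact pow_le_one₀ (by positivity) hαb

lemma exists_inv_pow_le_and_le_mul_log {b h : ℝ} (hb : 1 < b) (h0 : 0 < h) (h2 : h ≤ 1 / 2) :
    ∃ N : ℕ, (b ^ N)⁻¹ ≤ h ∧
      (N : ℝ) ≤ (1 / Real.log b + 1 / Real.log 2) * Real.log (1 / h) := by
  have h2h : 2 ≤ 1 / h := by rw [le_div_iff₀ h0]; linarith
  have hlog2 : 0 < Real.log 2 := Real.log_pos one_lt_two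
  have hlog : Real.log 2 ≤ Real.log (1 / h) := Real.log_le_log two_pos h2h
  have hlogb : 0 ≤ Real.logb b (1 / h) := Real.logb_nonneg hb (by linarith)
  refine ⟨⌈Real.logb b (1 / h)⌉₊, ?_, ?_⟩
  · rw [inv_le_comm₀ (by positivity) h0, ← Real.rpow_natCast, ← one_div]
    calc 1 / h = b ^ Real.logb b (1 / h) :=
          (Real.rpow_logb (by linarith) hb.ne' (by positivity)).symm
      _ ≤ _ := Real.rpow_le_rpow_of_exponent_le hb.le (Nat.le_ceil _)
  · calc (⌈Real.logb b (1 / h)⌉₊ : ℝ) ≤ Real.logb b (1 / h) + 1 := (Nat.ceil_lt_add_one hlogb).le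
      _ ≤ Real.log (1 / h) / Real.log b + Real.log (1 / h) / Real.log 2 := by
          rw [Real.logb]; gcongr; rw [le_div_iff₀ hlog2]; linarith
      _ = _ := by ring

lemma rpow_mul_log_one_div_le {x δ : ℝ} (hx : 0 < x) (hδ : 0 < δ) :
    x ^ δ * Real.log (1 / x) ≤ 1 / δ :=
  calc x ^ δ * Real.log (1 / x) ≤ x ^ δ * ((1 / x) ^ δ / δ) := by
        gcongr; exact Real.log_le_rpow_div (by positivity) hδ
    _ = 1 / δ := by
        rw [Real.div_rpow zero_le_one hx.le, Real.one_rpow]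
        field_simp

noncomputable def fractalSum (α b : ℝ) (g : ℝ → ℝ) (t : ℝ) : ℝ :=
  ∑' n : ℕ, α ^ n * g (b ^ n * t)

section FractalSum

variable {α b γ M H : ℝ} {g : ℝ → ℝ}

lemma fractalSum_sub (hα0 : 0 ≤ α) (hα1 : α < 1) (hg : ∀ x, |g x| ≤ M) (t s : ℝ) :
    fractalSum α b g t - fractalSum α b g s =
      ∑' n : ℕ, α ^ n * (g (b ^ n * t) - g (b ^ n * s)) := by
  have hsum (u : ℝ) : Summable fun n : ℕ => α ^ n * g (b ^ n * u) :=
    Summable.of_norm_bounded ((summable_geometric_of_lt_one hα0 hα1).mul_left M) fun n => by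
      rw [Real.norm_eq_abs, abs_mul, abs_pow, abs_of_nonneg hα0, mul_comm]
      exact mul_le_mul_of_nonneg_right (hg _) (pow_nonneg hα0 n)
  simp only [fractalSum, mul_sub]
  exact ((hsum t).tsum_sub (hsum s)).symm

/-- The `n`-th term is at most `H (α b^γ)ⁿ |t - s|^γ` and at most `2 M αⁿ`; use the first bound
for `n < N`. -/
lemma abs_fractalSum_sub_le (hα0 : 0 ≤ α) (hα1 : α < 1) (hb : 0 ≤ b) (hαb : α * b ^ γ ≤ 1)
    (hH : 0 ≤ H) (hg : ∀ x, |g x| ≤ M) (hgH : ∀ x y, |g x - g y| ≤ H * |x - y| ^ γ)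
    (t s : ℝ) (N : ℕ) :
    |fractalSum α b g t - fractalSum α b g s| ≤
      N * (H * |t - s| ^ γ) + 2 * M * α ^ N / (1 - α) := by
  rw [fractalSum_sub hα0 hα1 hg]
  refine abs_tsum_le_of_le_of_le_geometric hα0 hα1 (fun n => ?_) (fun n => ?_) N
  · rw [abs_mul, abs_pow, abs_of_nonneg hα0]
    calc α ^ n * |g (b ^ n * t) - g (b ^ n * s)|
        ≤ α ^ n * (H * |b ^ n * t - b ^ n * s| ^ γ) := by gcongr; exact hgH _ _
      _ = H * (α ^ n * (b ^ n) ^ γ) * |t - s| ^ γ := by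
          rw [← mul_sub, abs_mul, abs_of_nonneg (by positivity),
            Real.mul_rpow (by positivity) (abs_nonneg _)]
          ring
      _ ≤ H * 1 * |t - s| ^ γ := by gcongr; exact pow_mul_rpow_pow_le_one hα0 hb hαb n
      _ = H * |t - s| ^ γ := by ring
  · rw [abs_mul, abs_pow, abs_of_nonneg hα0]
    calc α ^ n * |g (b ^ n * t) - g (b ^ n * s)| ≤ α ^ n * (M + M) := by
          gcongr; exact (abs_sub _ _).trans (add_le_add (hg _) (hg _))
      _ = 2 * M * α ^ n := by ring

/-- Choosing `N ≈ log_b (1 / |t - s|)` balances the two parts of `abs_fractalSum_sub_le`. -/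
lemma exists_abs_fractalSum_sub_le_mul_log (hα0 : 0 < α) (hα1 : α < 1) (hb : 1 < b)
    (hαb : α * b ^ γ ≤ 1) (hγ : 0 ≤ γ) (hH : 0 < H) (hg : ∀ x, |g x| ≤ M)
    (hgH : ∀ x y, |g x - g y| ≤ H * |x - y| ^ γ) :
    ∃ c > 0, ∀ s t, 0 < |t - s| → |t - s| ≤ 1 / 2 →
      |fractalSum α b g t - fractalSum α b g s| ≤
        c * |t - s| ^ γ * Real.log (1 / |t - s|) := by
  have hM : 0 ≤ M := (abs_nonneg _).trans (hg 0)
  have hlogb := Real.log_pos hb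
  have hlog2 : 0 < Real.log 2 := Real.log_pos one_lt_two
  refine ⟨H * (1 / Real.log b + 1 / Real.log 2) + 2 * M / ((1 - α) * Real.log 2),
    by positivity, fun s t h0 h2 => ?_⟩
  set h := |t - s|
  obtain ⟨N, hbN, hN⟩ := exists_inv_pow_le_and_le_mul_log hb h0 h2
  have hαN : α ^ N ≤ h ^ γ :=
    calc α ^ N = α ^ N * (b ^ N) ^ γ * ((b ^ N)⁻¹) ^ γ := by
          rw [Real.inv_rpow (by positivity), mul_assoc, mul_inv_cancel₀ (by positivity), mul_one]
      _ ≤ 1 * h ^ γ :=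
          mul_le_mul (pow_mul_rpow_pow_le_one hα0.le (by linarith) hαb N)
            (Real.rpow_le_rpow (by positivity) hbN hγ) (by positivity) zero_le_one
      _ = h ^ γ := one_mul _
  have hlog : 1 ≤ Real.log (1 / h) / Real.log 2 := by
    rw [le_div_iff₀ hlog2, one_mul]
    exact Real.log_le_log two_pos (by rw [le_div_iff₀ h0]; linarith)
  calc |fractalSum α b g t - fractalSum α b g s|
      ≤ N * (H * h ^ γ) + 2 * M * α ^ N / (1 - α) :=
        abs_fractalSum_sub_le hα0.le hα1 (by linarith) hαb hH.le hg hgH t s N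
    _ ≤ (1 / Real.log b + 1 / Real.log 2) * Real.log (1 / h) * (H * h ^ γ)
        + 2 * M * h ^ γ / (1 - α) * (Real.log (1 / h) / Real.log 2) := by
        refine add_le_add (by gcongr) ?_
        calc 2 * M * α ^ N / (1 - α) ≤ 2 * M * h ^ γ / (1 - α) := by gcongr
          _ ≤ _ := le_mul_of_one_le_right (by positivity) hlog
    _ = _ := by field_simp

end FractalSum

lemma exists_holder_of_modulus_mul_log {F : ℝ → ℝ} {c D γ β : ℝ} (hc : 0 < c) (hβ : 0 < β)
    (hβγ : β < γ) (hD : ∀ s t, |F t - F s| ≤ D)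
    (hmod : ∀ s t, 0 < |t - s| → |t - s| ≤ 1 / 2 →
      |F t - F s| ≤ c * |t - s| ^ γ * Real.log (1 / |t - s|)) :
    ∃ L > 0, ∀ s t, |F t - F s| ≤ L * |t - s| ^ β := by
  have hD0 : 0 ≤ D := (abs_nonneg _).trans (hD 0 0)
  have hδ : 0 < γ - β := sub_pos.2 hβγ
  refine ⟨c / (γ - β) + D * 2 ^ β, by positivity, fun s t => ?_⟩
  rcases eq_or_ne t s with rfl | hts
  · simp [Real.zero_rpow hβ.ne']
  have h0 : 0 < |t - s| := abs_pos.2 (sub_ne_zero.2 hts)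
  set h := |t - s|
  rcases le_or_gt h (1 / 2) with h2 | h2
  · have hsplit : h ^ γ = h ^ β * h ^ (γ - β) := by rw [← Real.rpow_add h0, add_sub_cancel]
    calc |F t - F s| ≤ c * h ^ γ * Real.log (1 / h) := hmod s t h0 h2
      _ = c * h ^ β * (h ^ (γ - β) * Real.log (1 / h)) := by rw [hsplit]; ring
      _ ≤ c * h ^ β * (1 / (γ - β)) := by gcongr; exact rpow_mul_log_one_div_le h0 hδ
      _ = c / (γ - β) * h ^ β := by ring
      _ ≤ (c / (γ - β) + D * 2 ^ β) * h ^ β := by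
          gcongr; exact le_add_of_nonneg_right (by positivity)
  · calc |F t - F s| ≤ D * 1 := (hD s t).trans_eq (mul_one D).symm
      _ ≤ D * (2 * h) ^ β := by gcongr; exact Real.one_le_rpow (by linarith) hβ.le
      _ = D * 2 ^ β * h ^ β := by rw [Real.mul_rpow zero_le_two h0.le, mul_assoc]
      _ ≤ (c / (γ - β) + D * 2 ^ β) * h ^ β := by
          gcongr; exact le_add_of_nonneg_left (by positivity)

theorem fractal_modulus_of_eq_general (b : ℕ) (hb : 2 ≤ b) (α γ : ℝ)
    (hα : α ∈ Set.Ioo (0 : ℝ) 1) (hγ0 : 0 < γ)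
    (φ : ℝ → ℝ) (C : ℝ) (hC : 0 < C)
    (hHolder : ∀ x ∈ Set.Icc (0 : ℝ) 1, ∀ y ∈ Set.Icc (0 : ℝ) 1,
      |φ x - φ y| ≤ C * |x - y| ^ γ)
    (hφ : φ 0 = φ 1)
    (K : ℝ) (hK : K = min 1 (-Real.log α / Real.log b))
    (f : ℝ → ℝ)
    (hf : ∀ t, f t = ∑' n : ℕ, α ^ n * φ (Int.fract ((b : ℝ) ^ n * t)))
    (heq : K = γ) :
    (∃ c > 0, ∀ s ∈ Set.Icc (0 : ℝ) 1, ∀ t ∈ Set.Icc (0 : ℝ) 1,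
      0 < |t - s| → |t - s| ≤ 1 / 2 →
        |f t - f s| ≤ c * |t - s| ^ γ * Real.log (1 / |t - s|)) ∧
    (∀ β : ℝ, 0 < β → β < γ →
      ∃ L > 0, ∀ s ∈ Set.Icc (0 : ℝ) 1, ∀ t ∈ Set.Icc (0 : ℝ) 1,
        |f t - f s| ≤ L * |t - s| ^ β) := by
  obtain ⟨hα0, hα1⟩ := hα
  have hb1 : (1 : ℝ) < b := by exact_mod_cast hb
  have hαb : α * (b : ℝ) ^ γ ≤ 1 :=
    mul_rpow_le_one_of_le_neg_log_div_log hα0 hb1 (by rw [← heq, hK]; exact min_le_right _ _)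
  obtain rfl : f = fractalSum α b (φ ∘ Int.fract) := funext hf
  have hg := abs_comp_fract_le hC.le hγ0.le hHolder
  have hgH := abs_comp_fract_sub_le hC.le hγ0 hHolder hφ
  obtain ⟨c, hc, hmod⟩ := exists_abs_fractalSum_sub_le_mul_log hα0 hα1 hb1 hαb hγ0.le
    (by positivity) hg hgH
  refine ⟨⟨c, hc, fun s _ t _ => hmod s t⟩, fun β hβ hβγ => ?_⟩
  have hD (s t : ℝ) :=
    abs_fractalSum_sub_le hα0.le hα1 (by positivity) hαb (by positivity) hg hgH t s 0
  simp only [CharP.cast_eq_zero, zero_mul, pow_zero, mul_one, zero_add] at hD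
  obtain ⟨L, hL, hholder⟩ := exists_holder_of_modulus_mul_log hc hβ hβγ hD hmod
  exact ⟨L, hL, fun s _ t _ => hholder s t⟩

/-- Proposition A.1 (b): in the critical case `K = γ`, the fractal function
`f(t) = ∑ αⁿ φ(⟨bⁿ t⟩)` admits the modulus of continuity `c t^γ log(1/t)`;
in particular it is Hölder continuous with any exponent `β < γ`. -/
theorem fractal_modulus_of_eq (b : ℕ) (hb : 2 ≤ b) (α γ : ℝ)
    (hα : α ∈ Set.Ioo (0 : ℝ) 1) (hγ0 : 0 < γ) (hγ1 : γ ≤ 1)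
    (φ : ℝ → ℝ) (C : ℝ) (hC : 0 < C)
    (hHolder : ∀ x ∈ Set.Icc (0 : ℝ) 1, ∀ y ∈ Set.Icc (0 : ℝ) 1,
      |φ x - φ y| ≤ C * |x - y| ^ γ)
    (hφ : φ 0 = φ 1)
    (K : ℝ) (hK : K = min 1 (-Real.log α / Real.log b))
    (f : ℝ → ℝ)
    (hf : ∀ t, f t = ∑' n : ℕ, α ^ n * φ (Int.fract ((b : ℝ) ^ n * t)))
    (heq : K = γ) :
    (∃ c > 0, ∀ s ∈ Set.Icc (0 : ℝ) 1, ∀ t ∈ Set.Icc (0 : ℝ) 1,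
      0 < |t - s| → |t - s| ≤ 1 / 2 →
        |f t - f s| ≤ c * |t - s| ^ γ * Real.log (1 / |t - s|)) ∧
    (∀ β : ℝ, 0 < β → β < γ →
      ∃ L > 0, ∀ s ∈ Set.Icc (0 : ℝ) 1, ∀ t ∈ Set.Icc (0 : ℝ) 1,
        |f t - f s| ≤ L * |t - s| ^ β) :=
  fractal_modulus_of_eq_general b hb α γ hα hγ0 φ C hC hHolder hφ K hK f hf heq
end

section
/- Let b ∈ {2,3,…}, α ∈ (0,1), p > 0, and let φ : [0,1] → ℝ be continuous with φ(0) = φ(1). Define f(t) := ∑_{n=0}^∞ αⁿ φ(⟨bⁿ t⟩). Let U₁, U₂, … be independent random variables uniformly distributed on {0,…,b−1} and R_m := ∑_{i=1}^m U_i b^{i−1}. Then for every n ∈ ℕ, ∑_{k=0}^{bⁿ−1} |f((k+1)·b^{−n}) − f(k·b^{−n})|^p = (α^p·b)ⁿ · E[ |∑_{m=1}^n α^{−m}·(φ((R_m + 1)·b^{−m}) − φ(R_m·b^{−m}))|^p ]. -/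
open MeasureTheory ProbabilityTheory Finset
open scoped ENNReal

/-! At both endpoints of `[k / b ^ n, (k + 1) / b ^ n]` the terms of index `j ≥ n` of the series
equal `α ^ j φ 0`, so they cancel and the increment of `f` is a finite sum; after
the reindexing `m = n - 1 - j`, and with `φ 0 = φ 1` absorbing the carry when `k + 1` wraps
around modulo `b ^ (m + 1)`, it equals `α ^ n S k`, where `S k` depends on `k` only through
the residues `k % b ^ (m + 1)`. The `U i` are the base-`b` digits of `R n`, so `R n` is uniform
on `{0, …, b ^ n - 1}` and `R n % b ^ (m + 1) = R (m + 1)`: the expectation is the average of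
`|S k| ^ p` over `k < b ^ n`. -/

section Digits

variable {b : ℕ} {u : ℕ → ℕ}

theorem sum_range_mul_pow_lt (hu : ∀ i, u i < b) (n : ℕ) :
    ∑ i ∈ range n, u i * b ^ i < b ^ n := by
  induction n with
  | zero => simp
  | succ n ih =>
    rw [sum_range_succ, pow_succ']
    linarith [Nat.mul_le_mul_right (b ^ n) (hu n), Nat.succ_mul (u n) (b ^ n)]

theorem sum_range_mul_pow_mod (hu : ∀ i, u i < b) {m n : ℕ} (hmn : m ≤ n) :
    (∑ i ∈ range n, u i * b ^ i) % b ^ m = ∑ i ∈ range m, u i * b ^ i := by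
  obtain ⟨l, rfl⟩ := Nat.exists_eq_add_of_le hmn
  have htail : ∑ i ∈ range l, u (m + i) * b ^ (m + i) =
      b ^ m * ∑ i ∈ range l, u (m + i) * b ^ i := by
    rw [mul_sum]
    exact sum_congr rfl fun i _ => by ring
  rw [sum_range_add, htail, Nat.add_mul_mod_self_left,
    Nat.mod_eq_of_lt (sum_range_mul_pow_lt hu m)]

theorem sum_range_mul_pow_div_pow_mod (hu : ∀ i, u i < b) {j n : ℕ} (hjn : j < n) :
    (∑ i ∈ range n, u i * b ^ i) / b ^ j % b = u j := by
  have h := Nat.mod_pow_succ (x := ∑ i ∈ range n, u i * b ^ i) (b := b) (k := j)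
  rw [sum_range_mul_pow_mod hu hjn, sum_range_mul_pow_mod hu hjn.le, sum_range_succ,
    mul_comm (u j)] at h
  exact (Nat.eq_of_mul_eq_mul_left (pow_pos (Nat.zero_lt_of_lt (hu j)) j) (by omega)).symm

theorem sum_range_div_pow_mod_mul_pow (b k n : ℕ) :
    ∑ i ∈ range n, k / b ^ i % b * b ^ i = k % b ^ n := by
  induction n with
  | zero => simp [Nat.mod_one]
  | succ n ih => rw [sum_range_succ, ih, Nat.mod_pow_succ, mul_comm]

theorem sum_range_mul_pow_eq_iff (hu : ∀ i, u i < b) {n k : ℕ} (hk : k < b ^ n) :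
    ∑ i ∈ range n, u i * b ^ i = k ↔ ∀ i < n, u i = k / b ^ i % b := by
  constructor
  · rintro rfl i hi
    exact (sum_range_mul_pow_div_pow_mod hu hi).symm
  · intro h
    rw [sum_congr rfl fun i hi => by rw [h i (mem_range.1 hi)],
      sum_range_div_pow_mod_mul_pow, Nat.mod_eq_of_lt hk]

end Digits

section Uniform

variable {Ω : Type*} [MeasurableSpace Ω] {P : Measure Ω}

theorem measure_sum_range_mul_pow_eq_inv_pow {b : ℕ} (hb : 0 < b) {U : ℕ → Ω → ℕ}
    (hUlt : ∀ i ω, U i ω < b)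
    (hUunif : ∀ i, ∀ j < b, P {ω | U i ω = j} = (b : ℝ≥0∞)⁻¹)
    (hUindep : iIndepFun U P) {n k : ℕ} (hk : k < b ^ n) :
    P {ω | ∑ i ∈ range n, U i ω * b ^ i = k} = ((b : ℝ≥0∞) ^ n)⁻¹ := by
  have hset : {ω | ∑ i ∈ range n, U i ω * b ^ i = k} =
      ⋂ i ∈ range n, U i ⁻¹' {k / b ^ i % b} := by
    ext ω
    simpa using sum_range_mul_pow_eq_iff (fun i => hUlt i ω) hk
  have hdigit : ∀ i, P (U i ⁻¹' {k / b ^ i % b}) = (b : ℝ≥0∞)⁻¹ :=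
    fun i => hUunif i _ (Nat.mod_lt _ hb)
  rw [hset, hUindep.measure_inter_preimage_eq_mul _ fun i _ => measurableSet_singleton _,
    prod_congr rfl fun i _ => hdigit i, prod_const, card_range, ENNReal.inv_pow]

theorem integral_comp_eq_inv_mul_sum [IsFiniteMeasure P] {X : Ω → ℕ} {N : ℕ}
    (hX : Measurable X) (hlt : ∀ ω, X ω < N)
    (hunif : ∀ k < N, P {ω | X ω = k} = (N : ℝ≥0∞)⁻¹) (g : ℕ → ℝ) :
    ∫ ω, g (X ω) ∂P = (N : ℝ)⁻¹ * ∑ k ∈ range N, g k := by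
  have hsupp : (P.map X).restrict (range N) = P.map X :=
    Measure.restrict_eq_self_of_ae_mem <|
      (ae_map_iff hX.aemeasurable (by measurability)).2 <|
        Filter.Eventually.of_forall fun ω => by simpa using hlt ω
  rw [← integral_map hX.aemeasurable (.of_discrete), ← hsupp,
    setIntegral_finset _ IntegrableOn.finset, mul_sum]
  refine sum_congr rfl fun k hk => ?_
  have hk' : P (X ⁻¹' {k}) = (N : ℝ≥0∞)⁻¹ := hunif k (mem_range.1 hk)
  rw [measureReal_def, Measure.map_apply hX (measurableSet_singleton k), hk']
  simp

end Uniform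

noncomputable def fractalFun (α : ℝ) (b : ℕ) (φ : ℝ → ℝ) (t : ℝ) : ℝ :=
  ∑' n : ℕ, α ^ n * φ (Int.fract ((b : ℝ) ^ n * t))

section Fractal

variable {α : ℝ} {b : ℕ} {φ : ℝ → ℝ}

theorem summable_fractalFun (hα : |α| < 1) (hφ : ContinuousOn φ (Set.Icc 0 1)) (t : ℝ) :
    Summable fun n : ℕ => α ^ n * φ (Int.fract ((b : ℝ) ^ n * t)) := by
  obtain ⟨C, hC⟩ := isCompact_Icc.exists_bound_of_continuousOn hφ
  refine .of_norm_bounded ((summable_geometric_of_abs_lt_one hα).norm.mul_right C) fun n => ?_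
  rw [norm_mul]
  exact mul_le_mul_of_nonneg_left
    (hC _ ⟨Int.fract_nonneg _, (Int.fract_lt_one _).le⟩) (norm_nonneg _)

theorem comp_fract_eq_of_mem_Icc (hφ : φ 0 = φ 1) {x : ℝ} (hx : x ∈ Set.Icc 0 1) :
    φ (Int.fract x) = φ x := by
  rcases hx.2.lt_or_eq with hx1 | rfl
  · rw [Int.fract_eq_self.2 ⟨hx.1, hx1⟩]
  · rw [Int.fract_one, hφ]

theorem comp_fract_natCast_add_one_div (hφ : φ 0 = φ 1) (k : ℕ) {d : ℕ} (hd : 0 < d) :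
    φ (Int.fract (((k : ℝ) + 1) / d)) = φ (((k % d : ℕ) + 1) / d) := by
  have hfract : Int.fract (((k : ℝ) + 1) / d) = Int.fract ((((k % d : ℕ) : ℝ) + 1) / d) := by
    simp only [← Nat.cast_succ, Int.fract_div_natCast_eq_div_natCast_mod, Nat.succ_eq_add_one,
      Nat.mod_add_mod]
  have hd' : (0 : ℝ) < d := Nat.cast_pos.2 hd
  rw [hfract, comp_fract_eq_of_mem_Icc hφ ⟨by positivity, (div_le_one hd').2 ?_⟩]
  exact_mod_cast Nat.mod_lt k hd

theorem pow_mul_div_pow_of_le (hb : b ≠ 0) {j n : ℕ} (hjn : j ≤ n) (x : ℝ) :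
    (b : ℝ) ^ j * (x / b ^ n) = x / b ^ (n - j) := by
  rw [← Nat.sub_add_cancel hjn, pow_add, Nat.add_sub_cancel]
  field_simp

theorem fract_pow_mul_natCast_div_pow_of_le (hb : b ≠ 0) {j n : ℕ} (hnj : n ≤ j) (x : ℕ) :
    Int.fract ((b : ℝ) ^ j * (x / b ^ n)) = 0 := by
  have : (b : ℝ) ^ j * (x / b ^ n) = ((x * b ^ (j - n) : ℕ) : ℝ) := by
    rw [← Nat.sub_add_cancel hnj, pow_add, Nat.add_sub_cancel]
    push_cast
    field_simp
  rw [this, Int.fract_natCast]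

theorem fractalFun_natCast_div_sub (hα : |α| < 1) (hb : b ≠ 0)
    (hφ : ContinuousOn φ (Set.Icc 0 1)) (x y n : ℕ) :
    fractalFun α b φ (x / b ^ n) - fractalFun α b φ (y / b ^ n) =
      ∑ j ∈ range n, α ^ j *
        (φ (Int.fract (x / b ^ (n - j))) - φ (Int.fract (y / b ^ (n - j)))) := by
  rw [fractalFun, fractalFun,
    ← (summable_fractalFun hα hφ _).tsum_sub (summable_fractalFun hα hφ _),
    tsum_eq_sum fun j hj => ?_]
  · refine sum_congr rfl fun j hj => ?_
    rw [mul_sub, pow_mul_div_pow_of_le hb (mem_range.1 hj).le,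
      pow_mul_div_pow_of_le hb (mem_range.1 hj).le]
  · have hnj : n ≤ j := by simpa using hj
    rw [fract_pow_mul_natCast_div_pow_of_le hb hnj, fract_pow_mul_natCast_div_pow_of_le hb hnj,
      sub_self]

theorem fractalFun_natCast_add_one_div_sub (hα0 : α ≠ 0) (hα : |α| < 1) (hb : 0 < b)
    (hφc : ContinuousOn φ (Set.Icc 0 1)) (hφ : φ 0 = φ 1) (n k : ℕ) :
    fractalFun α b φ ((k + 1) / b ^ n) - fractalFun α b φ (k / b ^ n) =
      α ^ n * ∑ m ∈ range n, (α ^ (m + 1))⁻¹ *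
        (φ (((k % b ^ (m + 1) : ℕ) + 1) / b ^ (m + 1)) -
          φ ((k % b ^ (m + 1) : ℕ) / b ^ (m + 1))) := by
  have h := fractalFun_natCast_div_sub hα hb.ne' hφc (k + 1) k n
  push_cast at h
  rw [h, ← sum_range_reflect, mul_sum]
  refine sum_congr rfl fun m hm => ?_
  have hm : m < n := mem_range.1 hm
  have hwrap := comp_fract_natCast_add_one_div hφ k (pow_pos hb (m + 1))
  have hfract := Int.fract_div_natCast_eq_div_natCast_mod (k := ℝ) (m := k) (n := b ^ (m + 1))
  push_cast at hwrap hfract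
  have hpow : α ^ n = α ^ (n - 1 - m) * α ^ (m + 1) := by rw [← pow_add]; congr 1; omega
  rw [show n - (n - 1 - m) = m + 1 by omega, hwrap, hfract, hpow]
  field_simp

end Fractal

theorem variation_sum_eq_expectation_general {Ω : Type*} [MeasurableSpace Ω]
    (P : Measure Ω) [IsProbabilityMeasure P]
    (b : ℕ) (hb : 2 ≤ b) (α : ℝ) (hα : α ∈ Set.Ioo (0 : ℝ) 1)
    (p : ℝ)
    (φ : ℝ → ℝ) (hφcont : ContinuousOn φ (Set.Icc (0 : ℝ) 1)) (hφ : φ 0 = φ 1)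
    (f : ℝ → ℝ)
    (hf : ∀ t, f t = ∑' n : ℕ, α ^ n * φ (Int.fract ((b : ℝ) ^ n * t)))
    (U : ℕ → Ω → ℕ) (hUmeas : ∀ i, Measurable (U i)) (hUlt : ∀ i ω, U i ω < b)
    (hUunif : ∀ i, ∀ j < b, P {ω | U i ω = j} = (b : ℝ≥0∞)⁻¹)
    (hUindep : iIndepFun U P)
    (R : ℕ → Ω → ℕ) (hR : ∀ m ω, R m ω = ∑ i ∈ Finset.range m, U i ω * b ^ i) :
    ∀ n : ℕ,
      ∑ k ∈ Finset.range (b ^ n),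
          |f (((k : ℝ) + 1) / (b : ℝ) ^ n) - f ((k : ℝ) / (b : ℝ) ^ n)| ^ p
        = (α ^ p * (b : ℝ)) ^ n *
            ∫ ω, |∑ m ∈ Finset.range n, (α ^ (m + 1))⁻¹ *
                (φ (((R (m + 1) ω : ℝ) + 1) / (b : ℝ) ^ (m + 1)) -
                  φ ((R (m + 1) ω : ℝ) / (b : ℝ) ^ (m + 1)))| ^ p ∂P := by
  intro n
  obtain ⟨hα0, hα1⟩ := hα
  have hb0 : 0 < b := by omega
  obtain rfl : f = fractalFun α b φ := funext hf
  set S : ℕ → ℝ := fun k => ∑ m ∈ range n, (α ^ (m + 1))⁻¹ *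
    (φ (((k % b ^ (m + 1) : ℕ) + 1) / b ^ (m + 1)) - φ ((k % b ^ (m + 1) : ℕ) / b ^ (m + 1)))
  have hRmeas : Measurable (R n) := by
    rw [funext (hR n)]
    exact Finset.measurable_sum _ fun i _ => (hUmeas i).mul_const _
  have hRlt : ∀ ω, R n ω < b ^ n :=
    fun ω => hR n ω ▸ sum_range_mul_pow_lt (fun i => hUlt i ω) n
  have hRunif : ∀ k < b ^ n, P {ω | R n ω = k} = ((b ^ n : ℕ) : ℝ≥0∞)⁻¹ := by
    intro k hk
    simp only [hR]
    push_cast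
    exact measure_sum_range_mul_pow_eq_inv_pow hb0 hUlt hUunif hUindep hk
  have hRmod : ∀ ω, ∀ m ≤ n, R n ω % b ^ m = R m ω := fun ω m hm => by
    simp only [hR]
    exact sum_range_mul_pow_mod (fun i => hUlt i ω) hm
  rw [integral_congr_ae (g := fun ω => |S (R n ω)| ^ p) (.of_forall fun ω => ?_),
    integral_comp_eq_inv_mul_sum hRmeas hRlt hRunif fun k => |S k| ^ p, ← mul_assoc,
    mul_sum]
  · refine sum_congr rfl fun k _ => ?_
    rw [fractalFun_natCast_add_one_div_sub hα0.ne' (abs_lt.2 ⟨by linarith, hα1⟩) hb0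
        hφcont hφ, abs_mul, abs_of_pos (pow_pos hα0 n),
      Real.mul_rpow (by positivity) (abs_nonneg _),
      ← Real.rpow_pow_comm hα0.le, mul_pow, Nat.cast_pow,
      mul_inv_cancel_right₀ (pow_ne_zero n (Nat.cast_ne_zero.2 hb0.ne'))]
  · simp only [S]
    congr 2
    exact sum_congr rfl fun m hm => by rw [hRmod ω (m + 1) (mem_range.1 hm)]

/-- Equation (3.4)/(3.6) of the paper: the `n`-th level `p`-th variation sum of `f`
along the `b`-adic partition equals `(α^p b)^n` times the expectation of the `p`-th
power of the randomized increment sum. -/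
theorem variation_sum_eq_expectation {Ω : Type*} [MeasurableSpace Ω]
    (P : Measure Ω) [IsProbabilityMeasure P]
    (b : ℕ) (hb : 2 ≤ b) (α : ℝ) (hα : α ∈ Set.Ioo (0 : ℝ) 1)
    (p : ℝ) (hp : 0 < p)
    (φ : ℝ → ℝ) (hφcont : ContinuousOn φ (Set.Icc (0 : ℝ) 1)) (hφ : φ 0 = φ 1)
    (f : ℝ → ℝ)
    (hf : ∀ t, f t = ∑' n : ℕ, α ^ n * φ (Int.fract ((b : ℝ) ^ n * t)))
    (U : ℕ → Ω → ℕ) (hUmeas : ∀ i, Measurable (U i)) (hUlt : ∀ i ω, U i ω < b)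
    (hUunif : ∀ i, ∀ j < b, P {ω | U i ω = j} = (b : ℝ≥0∞)⁻¹)
    (hUindep : iIndepFun U P)
    (R : ℕ → Ω → ℕ) (hR : ∀ m ω, R m ω = ∑ i ∈ Finset.range m, U i ω * b ^ i) :
    ∀ n : ℕ,
      ∑ k ∈ Finset.range (b ^ n),
          |f (((k : ℝ) + 1) / (b : ℝ) ^ n) - f ((k : ℝ) / (b : ℝ) ^ n)| ^ p
        = (α ^ p * (b : ℝ)) ^ n *
            ∫ ω, |∑ m ∈ Finset.range n, (α ^ (m + 1))⁻¹ *
                (φ (((R (m + 1) ω : ℝ) + 1) / (b : ℝ) ^ (m + 1)) -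
                  φ ((R (m + 1) ω : ℝ) / (b : ℝ) ^ (m + 1)))| ^ p ∂P :=
  variation_sum_eq_expectation_general P b hb α hα p φ hφcont hφ f hf U hUmeas hUlt hUunif hUindep R
    hR
end

section
/- Let p > 1 and let b ∈ {2,3,…}. Let (Y(t))_{t∈[0,1]} be a centered Gaussian process on a probability space (Ω, F, P); i.e., every finite linear combination ∑_i a_i Y(t_i) (a_i ∈ ℝ, t_i ∈ [0,1]) is a centered Gaussian real random variable. Suppose that P-almost surely, limsup_{n→∞} ∑_{k=0}^{bⁿ−1} |Y((k+1)·b^{−n}) − Y(k·b^{−n})|^p < ∞. Then, with c(s,t) := E[Y(s)·Y(t)], for every s ∈ [0,1] one has limsup_{n→∞} ∑_{k=0}^{bⁿ−1} |c(s, (k+1)·b^{−n}) − c(s, k·b^{−n})|^p < ∞. -/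
open MeasureTheory ProbabilityTheory Filter
open scoped ENNReal NNReal

/-!
Fix `s` and a level `n`, write `Δₖ = c(s, tₖ₊₁) - c(s, tₖ)` and test the increments of `Y`
against the dual vector `aₖ = Δₖ |Δₖ|^(p-2)`. The centered Gaussian variable
`W = ∑ aₖ (Y(tₖ₊₁) - Y(tₖ))` satisfies `E[Y(s) W] = ∑ |Δₖ|^p =: S`, so Cauchy–Schwarz gives
`S ≤ ‖Y(s)‖₂ ‖W‖₂`. By Hölder with `1/p + 1/q = 1`, `|W| ≤ S^(1/q) Vₙ^(1/p)`, where `Vₙ` is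
the `p`-variation sum of the path, and almost sure boundedness of `Vₙ` yields one level `M`
with `P(Vₙ ≤ M) ≥ 1/2` for all large `n`. A centered Gaussian putting mass `1/2` on `[-t, t]`
has standard deviation at most `2t`, hence `S ≤ 2 ‖Y(s)‖₂ S^(1/q) M^(1/p)`, that is,
`S ≤ (2 ‖Y(s)‖₂)^p M`.
-/

open Real Finset

lemma hasLaw_of_map_eq {Ω 𝓧 : Type*} [MeasurableSpace Ω] [MeasurableSpace 𝓧] {P : Measure Ω}
    {X : Ω → 𝓧} {ν : Measure 𝓧} [NeZero ν] (h : P.map X = ν) : HasLaw X ν P :=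
  ⟨AEMeasurable.of_map_ne_zero (h ▸ NeZero.ne ν), h⟩

lemma gaussianReal_Icc_le (μ : ℝ) {v : ℝ≥0} (hv : v ≠ 0) (a b : ℝ) :
    gaussianReal μ v (Set.Icc a b) ≤ ENNReal.ofReal ((b - a) / √(2 * π * v)) := by
  have hpdf : ∀ x, gaussianPDF μ v x ≤ ENNReal.ofReal (√(2 * π * v))⁻¹ := fun x ↦ by
    refine ENNReal.ofReal_le_ofReal ?_
    rw [gaussianPDFReal_def]
    refine mul_le_of_le_one_right (by positivity) (exp_le_one_iff.2 ?_)
    exact div_nonpos_of_nonpos_of_nonneg (neg_nonpos.2 (sq_nonneg _)) (by positivity)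
  calc gaussianReal μ v (Set.Icc a b)
      ≤ ∫⁻ _ in Set.Icc a b, ENNReal.ofReal (√(2 * π * v))⁻¹ := by
        rw [gaussianReal_apply μ hv]
        exact lintegral_mono hpdf
    _ = ENNReal.ofReal ((b - a) / √(2 * π * v)) := by
        rw [setLIntegral_const, volume_Icc, ← ENNReal.ofReal_mul (by positivity), div_eq_mul_inv,
          mul_comm]

lemma sqrt_le_two_mul_of_half_le_gaussianReal {v : ℝ≥0} {t : ℝ} (ht : 0 ≤ t)
    (h : 1 / 2 ≤ gaussianReal 0 v {x | |x| ≤ t}) : √v ≤ 2 * t := by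
  rcases eq_or_ne v 0 with rfl | hv
  · simpa using ht
  have hball : (1 : ℝ) / 2 ≤ (t - -t) / √(2 * π * v) := by
    have h' := h.trans (by simpa only [abs_le, Set.Icc_def] using gaussianReal_Icc_le 0 hv (-t) t)
    rwa [← ENNReal.ofReal_ofNat, ← ENNReal.ofReal_one, ← ENNReal.ofReal_div_of_pos two_pos,
      ENNReal.ofReal_le_ofReal_iff (div_nonneg (by linarith) (sqrt_nonneg _))] at h'
  have h2π : 2 ≤ √(2 * π) := le_sqrt_of_sq_le (by nlinarith [pi_gt_three])
  have hsqrt : √(2 * π * v) = √(2 * π) * √v := sqrt_mul (by positivity) _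
  rw [hsqrt, le_div_iff₀ (by positivity)] at hball
  nlinarith [sqrt_nonneg (v : ℝ)]

section GaussianLaw

variable {Ω : Type*} [MeasurableSpace Ω] {P : Measure Ω} {X : Ω → ℝ} {μ : ℝ} {v : ℝ≥0}

lemma ProbabilityTheory.HasLaw.memLp_of_gaussianReal (hX : HasLaw X (gaussianReal μ v) P)
    {r : ℝ≥0∞} (hr : r ≠ ∞) : MemLp X r P :=
  (memLp_map_measure_iff aestronglyMeasurable_id hX.aemeasurable).1
    (hX.map_eq ▸ memLp_id_gaussianReal' r hr)

lemma ProbabilityTheory.HasLaw.integral_sq_of_gaussianReal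
    (hX : HasLaw X (gaussianReal 0 v) P) : ∫ ω, X ω ^ 2 ∂P = v := by
  have hmean : P[X] = 0 := by rw [hX.integral_eq, integral_id_gaussianReal]
  rw [← variance_of_integral_eq_zero hX.aemeasurable hmean, hX.variance_eq,
    variance_id_gaussianReal]

lemma ProbabilityTheory.HasLaw.sqrt_le_two_mul_of_half_le (hX : HasLaw X (gaussianReal 0 v) P)
    {t : ℝ} (ht : 0 ≤ t) (h : 1 / 2 ≤ P {ω | |X ω| ≤ t}) : √v ≤ 2 * t :=
  sqrt_le_two_mul_of_half_le_gaussianReal ht <|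
    hX.measure_eq (p := (|·| ≤ t)) (isClosed_le continuous_abs continuous_const).measurableSet ▸ h

end GaussianLaw

lemma abs_integral_mul_le_sqrt_mul_sqrt {α : Type*} [MeasurableSpace α] {μ : Measure α}
    {f g : α → ℝ} (hf : MemLp f 2 μ) (hg : MemLp g 2 μ) :
    |∫ x, f x * g x ∂μ| ≤ √(∫ x, f x ^ 2 ∂μ) * √(∫ x, g x ^ 2 ∂μ) := by
  have hnorm : ∀ h : α → ℝ, (∫ x, ‖h x‖ ^ (2 : ℝ) ∂μ) ^ (1 / 2 : ℝ) = √(∫ x, h x ^ 2 ∂μ) :=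
    fun h ↦ by simp only [rpow_two, norm_eq_abs, sq_abs, sqrt_eq_rpow]
  calc |∫ x, f x * g x ∂μ| ≤ ∫ x, ‖f x‖ * ‖g x‖ ∂μ := by
        rw [← norm_eq_abs]
        simpa only [norm_mul] using norm_integral_le_integral_norm (fun x ↦ f x * g x)
    _ ≤ √(∫ x, f x ^ 2 ∂μ) * √(∫ x, g x ^ 2 ∂μ) := by
        rw [← hnorm f, ← hnorm g]
        exact integral_mul_norm_le_Lp_mul_Lq HolderConjugate.two_two (by simpa using hf)
          (by simpa using hg)

lemma exists_eventually_lt_measure_le_of_ae_eventually_le {α : Type*} [MeasurableSpace α]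
    {μ : Measure α} {S : ℕ → α → ℝ} (hS : ∀ᵐ x ∂μ, ∃ M, ∀ᶠ n in atTop, S n x ≤ M)
    {r : ℝ≥0∞} (hr : r < μ Set.univ) : ∃ M : ℝ, ∀ᶠ n in atTop, r < μ {x | S n x ≤ M} := by
  set A : ℕ → ℕ → Set α := fun m N ↦ {x | ∀ n ≥ N, S n x ≤ m}
  have hA_mono : ∀ m, Monotone (A m) := fun m N N' hN x hx n hn ↦ hx n (hN.trans hn)
  have hUA_mono : Monotone fun m ↦ ⋃ N, A m N := fun m m' hm ↦
    Set.iUnion_mono fun N x hx n hn ↦ (hx n hn).trans (by exact_mod_cast hm)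
  have hUUA : μ (⋃ m, ⋃ N, A m N) = μ Set.univ := by
    refine measure_congr (ae_eq_univ.2 (mem_ae_iff.1 ?_))
    filter_upwards [hS] with x ⟨M, hM⟩
    obtain ⟨N, hN⟩ := eventually_atTop.1 hM
    simpa using ⟨⌈M⌉₊, N, fun n hn ↦ (hN n hn).trans (Nat.le_ceil M)⟩
  obtain ⟨m, hm⟩ := ((tendsto_measure_iUnion_atTop hUA_mono).eventually_const_lt
    (hUUA ▸ hr)).exists
  obtain ⟨N, hN⟩ := ((tendsto_measure_iUnion_atTop (hA_mono m)).eventually_const_lt hm).exists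
  exact ⟨m, eventually_atTop.2 ⟨N, fun n hn ↦ hN.trans_le (measure_mono fun x hx ↦ hx n hn)⟩⟩

section Duality

variable {p q : ℝ}

lemma mul_abs_rpow_sub_two_mul_self (hp : p ≠ 0) (x : ℝ) : x * |x| ^ (p - 2) * x = |x| ^ p := by
  calc x * |x| ^ (p - 2) * x = |x| ^ (2 : ℝ) * |x| ^ (p - 2) := by
        rw [rpow_two, sq_abs]; ring
    _ = |x| ^ p := by rw [← rpow_add' (abs_nonneg x) (by simpa using hp)]; ring_nf

lemma abs_mul_abs_rpow_sub_two_rpow (hpq : p.HolderConjugate q) (x : ℝ) :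
    |x * |x| ^ (p - 2)| ^ q = |x| ^ p := by
  have hp1 : 1 + (p - 2) ≠ 0 := by linarith [hpq.lt]
  rw [abs_mul, abs_of_nonneg (rpow_nonneg (abs_nonneg x) _), ← rpow_one_add' (abs_nonneg x) hp1,
    ← rpow_mul (abs_nonneg x)]
  congr 1
  linear_combination hpq.sub_one_mul_conj

lemma abs_sum_mul_le_of_sum_rpow_le {ι : Type*} (hpq : p.HolderConjugate q) (s : Finset ι)
    (f g : ι → ℝ) {M : ℝ} (hM : ∑ i ∈ s, |g i| ^ p ≤ M) :
    |∑ i ∈ s, f i * g i| ≤ (∑ i ∈ s, |f i| ^ q) ^ q⁻¹ * M ^ p⁻¹ := by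
  calc |∑ i ∈ s, f i * g i| ≤ ∑ i ∈ s, |f i| * |g i| := by
        simpa only [abs_mul] using abs_sum_le_sum_abs (fun i ↦ f i * g i) s
    _ ≤ (∑ i ∈ s, |f i| ^ q) ^ q⁻¹ * (∑ i ∈ s, |g i| ^ p) ^ p⁻¹ := by
        simpa only [abs_abs, one_div] using inner_le_Lp_mul_Lq s (|f ·|) (|g ·|) hpq.symm
    _ ≤ (∑ i ∈ s, |f i| ^ q) ^ q⁻¹ * M ^ p⁻¹ := by
        gcongr
        exact hpq.inv_nonneg

lemma le_rpow_of_le_mul_rpow_inv (hpq : p.HolderConjugate q) {S C : ℝ} (hS : 0 ≤ S)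
    (hC : 0 ≤ C) (h : S ≤ C * S ^ q⁻¹) : S ≤ C ^ p := by
  rcases hS.eq_or_lt with rfl | hS
  · exact rpow_nonneg hC p
  have hSp : S ^ p⁻¹ ≤ C := by
    refine le_of_mul_le_mul_right ?_ (rpow_pos_of_pos hS q⁻¹)
    rwa [← rpow_add hS, hpq.inv_add_inv_eq_one, rpow_one]
  calc S = (S ^ p⁻¹) ^ p := (rpow_inv_rpow hS.le hpq.ne_zero).symm
    _ ≤ C ^ p := rpow_le_rpow (rpow_nonneg hS.le _) hSp hpq.nonneg

end Duality

theorem sum_abs_integral_mul_rpow_le {Ω ι : Type*} [MeasurableSpace Ω] {P : Measure Ω}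
    (s : Finset ι) {p : ℝ} (hp : 1 < p) {Z : Ω → ℝ} (hZ : MemLp Z 2 P) {X : ι → Ω → ℝ}
    (hX : ∀ a : ι → ℝ, ∃ v : ℝ≥0, HasLaw (fun ω ↦ ∑ i ∈ s, a i * X i ω) (gaussianReal 0 v) P)
    {M : ℝ} (hM : 1 / 2 ≤ P {ω | ∑ i ∈ s, |X i ω| ^ p ≤ M}) :
    ∑ i ∈ s, |∫ ω, Z ω * X i ω ∂P| ^ p ≤ (2 * √(∫ ω, Z ω ^ 2 ∂P)) ^ p * M := by
  classical
  set q := p.conjExponent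
  have hpq : p.HolderConjugate q := .conjExponent hp
  set Δ : ι → ℝ := fun i ↦ ∫ ω, Z ω * X i ω ∂P
  set S := ∑ i ∈ s, |Δ i| ^ p
  set σ := √(∫ ω, Z ω ^ 2 ∂P)
  set a : ι → ℝ := fun i ↦ Δ i * |Δ i| ^ (p - 2)
  obtain ⟨v, hW⟩ := hX a
  set W := fun ω ↦ ∑ i ∈ s, a i * X i ω
  have hM0 : 0 ≤ M := by
    by_contra! hM0
    have hempty : {ω | ∑ i ∈ s, |X i ω| ^ p ≤ M} = ∅ :=
      Set.eq_empty_of_forall_notMem fun ω hω ↦ hM0.not_ge (le_trans (by positivity) hω)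
    simp [hempty] at hM
  have hXL2 : ∀ i ∈ s, MemLp (X i) 2 P := fun i hi ↦ by
    obtain ⟨w, hw⟩ := hX fun j ↦ if j = i then 1 else 0
    have hXi : (fun ω ↦ ∑ j ∈ s, (if j = i then 1 else 0) * X j ω) = X i := by
      ext ω; simp [hi]
    exact (hXi ▸ hw).memLp_of_gaussianReal ENNReal.ofNat_ne_top
  have hZW : ∫ ω, Z ω * W ω ∂P = S := by
    simp only [W, mul_sum, mul_left_comm (Z _)]
    rw [integral_finsetSum s fun i hi ↦ by exact (hZ.integrable_mul (hXL2 i hi)).const_mul (a i)]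
    refine sum_congr rfl fun i _ ↦ ?_
    rw [integral_const_mul, mul_abs_rpow_sub_two_mul_self hpq.ne_zero]
  have hCS : S ≤ σ * √v := by
    rw [← hZW, ← hW.integral_sq_of_gaussianReal]
    exact (le_abs_self _).trans <| abs_integral_mul_le_sqrt_mul_sqrt hZ
      (hW.memLp_of_gaussianReal ENNReal.ofNat_ne_top)
  have hmedian : √v ≤ 2 * (S ^ q⁻¹ * M ^ p⁻¹) := by
    have hdual : ∑ i ∈ s, |a i| ^ q = S :=
      sum_congr rfl fun i _ ↦ abs_mul_abs_rpow_sub_two_rpow hpq _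
    refine hW.sqrt_le_two_mul_of_half_le (by positivity) (hM.trans (measure_mono fun ω hω ↦ ?_))
    show |W ω| ≤ _
    simpa only [hdual] using abs_sum_mul_le_of_sum_rpow_le hpq s a (X · ω) hω
  calc S ≤ (2 * σ * M ^ p⁻¹) ^ p := by
        refine le_rpow_of_le_mul_rpow_inv hpq (by positivity) (by positivity) ?_
        calc S ≤ σ * (2 * (S ^ q⁻¹ * M ^ p⁻¹)) := hCS.trans (by gcongr)
          _ = 2 * σ * M ^ p⁻¹ * S ^ q⁻¹ := by ring
    _ = (2 * σ) ^ p * M := by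
        rw [mul_rpow (by positivity) (by positivity), rpow_inv_rpow hM0 hpq.ne_zero]

lemma natCast_div_pow_mem_Icc {b n k : ℕ} (h : k ≤ b ^ n) :
    (k : ℝ) / (b : ℝ) ^ n ∈ Set.Icc (0 : ℝ) 1 :=
  ⟨by positivity, div_le_one_of_le₀ (by exact_mod_cast h) (by positivity)⟩

lemma exists_hasLaw_sum_mul_sub_of_fin {Ω ι : Type*} [MeasurableSpace Ω] {P : Measure Ω}
    {Y : ℝ → Ω → ℝ}
    (hGauss : ∀ (k : ℕ) (a : Fin k → ℝ) (t : Fin k → ℝ), (∀ i, t i ∈ Set.Icc (0 : ℝ) 1) →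
      ∃ v : ℝ≥0, Measure.map (fun ω => ∑ i, a i * Y (t i) ω) P = gaussianReal 0 v)
    (s : Finset ι) {u w : ι → ℝ} (hu : ∀ i ∈ s, u i ∈ Set.Icc (0 : ℝ) 1)
    (hw : ∀ i ∈ s, w i ∈ Set.Icc (0 : ℝ) 1) (a : ι → ℝ) :
    ∃ v : ℝ≥0, HasLaw (fun ω ↦ ∑ i ∈ s, a i * (Y (u i) ω - Y (w i) ω)) (gaussianReal 0 v) P := by
  let e := Fintype.equivFin (s ⊕ s)
  let A : s ⊕ s → ℝ := Sum.elim (fun i ↦ a i) (fun i ↦ -a i)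
  let T : s ⊕ s → ℝ := Sum.elim (fun i ↦ u i) (fun i ↦ w i)
  have hT : ∀ x, T x ∈ Set.Icc (0 : ℝ) 1 := by
    rintro (i | i)
    exacts [hu i i.2, hw i i.2]
  obtain ⟨v, hv⟩ := hGauss _ (A ∘ e.symm) (T ∘ e.symm) fun j ↦ hT _
  refine ⟨v, hasLaw_of_map_eq (hv ▸ ?_)⟩
  congr 1
  funext ω
  simp only [Function.comp_apply, e.symm.sum_comp fun x ↦ A x * Y (T x) ω, Fintype.sum_sum_type,
    A, T, Sum.elim_inl, Sum.elim_inr, sum_coe_sort s fun i ↦ a i * Y (u i) ω,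
    sum_coe_sort s fun i ↦ -a i * Y (w i) ω, ← sum_add_distrib]
  exact sum_congr rfl fun i _ ↦ by ring

theorem covariance_pth_variation_bounded_general {Ω : Type*} [MeasurableSpace Ω]
    (P : Measure Ω) [IsProbabilityMeasure P]
    (p : ℝ) (hp : 1 < p) (b : ℕ)
    (Y : ℝ → Ω → ℝ)
    (hGauss : ∀ (k : ℕ) (a : Fin k → ℝ) (t : Fin k → ℝ),
      (∀ i, t i ∈ Set.Icc (0 : ℝ) 1) →
      ∃ v : ℝ≥0, Measure.map (fun ω => ∑ i, a i * Y (t i) ω) P = gaussianReal 0 v)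
    (hfin : ∀ᵐ ω ∂P, ∃ M : ℝ, ∀ᶠ n in atTop,
      ∑ k ∈ Finset.range (b ^ n),
          |Y (((k : ℝ) + 1) / (b : ℝ) ^ n) ω - Y ((k : ℝ) / (b : ℝ) ^ n) ω| ^ p ≤ M) :
    ∀ s ∈ Set.Icc (0 : ℝ) 1, ∃ M : ℝ, ∀ᶠ n in atTop,
      ∑ k ∈ Finset.range (b ^ n),
          |(∫ ω, Y s ω * Y (((k : ℝ) + 1) / (b : ℝ) ^ n) ω ∂P)
            - (∫ ω, Y s ω * Y ((k : ℝ) / (b : ℝ) ^ n) ω ∂P)| ^ p ≤ M := by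
  intro s hs
  have hL2 : ∀ t ∈ Set.Icc (0 : ℝ) 1, MemLp (Y t) 2 P := fun t ht ↦ by
    obtain ⟨v, hv⟩ := hGauss 1 (fun _ ↦ 1) (fun _ ↦ t) fun _ ↦ ht
    exact (hasLaw_of_map_eq (by simpa using hv)).memLp_of_gaussianReal ENNReal.ofNat_ne_top
  have hint : ∀ t ∈ Set.Icc (0 : ℝ) 1, Integrable (fun ω ↦ Y s ω * Y t ω) P :=
    fun t ht ↦ (hL2 s hs).integrable_mul (hL2 t ht)
  have hright : ∀ n, ∀ k ∈ range (b ^ n), ((k : ℝ) + 1) / (b : ℝ) ^ n ∈ Set.Icc (0 : ℝ) 1 :=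
    fun n k hk ↦ by simpa using natCast_div_pow_mem_Icc (mem_range.1 hk)
  have hleft : ∀ n, ∀ k ∈ range (b ^ n), (k : ℝ) / (b : ℝ) ^ n ∈ Set.Icc (0 : ℝ) 1 :=
    fun n k hk ↦ natCast_div_pow_mem_Icc (mem_range.1 hk).le
  obtain ⟨M, hM⟩ := exists_eventually_lt_measure_le_of_ae_eventually_le hfin
    (r := 1 / 2) (by simp)
  refine ⟨(2 * √(∫ ω, Y s ω ^ 2 ∂P)) ^ p * M, ?_⟩
  filter_upwards [hM] with n hn
  refine (sum_congr rfl fun k hk ↦ ?_).trans_le <| sum_abs_integral_mul_rpow_le _ hp (hL2 s hs)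
    (exists_hasLaw_sum_mul_sub_of_fin hGauss _ (hright n) (hleft n)) hn.le
  simp only [mul_sub]
  rw [integral_sub (hint _ (hright n k hk)) (hint _ (hleft n k hk))]

/-- Corollary 2.7 (b) of the paper: if a centered Gaussian process has a.s. finite
`p`-th variation sums along the `b`-adic partitions, then for every `s` the function
`t ↦ c(s,t) = E[Y(s)Y(t)]` has bounded `p`-th variation sums along those partitions. -/
theorem covariance_pth_variation_bounded {Ω : Type*} [MeasurableSpace Ω]
    (P : Measure Ω) [IsProbabilityMeasure P]
    (p : ℝ) (hp : 1 < p) (b : ℕ) (hb : 2 ≤ b)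
    (Y : ℝ → Ω → ℝ) (hYmeas : ∀ t, Measurable (Y t))
    (hGauss : ∀ (k : ℕ) (a : Fin k → ℝ) (t : Fin k → ℝ),
      (∀ i, t i ∈ Set.Icc (0 : ℝ) 1) →
      ∃ v : ℝ≥0, Measure.map (fun ω => ∑ i, a i * Y (t i) ω) P = gaussianReal 0 v)
    (hfin : ∀ᵐ ω ∂P, ∃ M : ℝ, ∀ᶠ n in atTop,
      ∑ k ∈ Finset.range (b ^ n),
          |Y (((k : ℝ) + 1) / (b : ℝ) ^ n) ω - Y ((k : ℝ) / (b : ℝ) ^ n) ω| ^ p ≤ M) :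
    ∀ s ∈ Set.Icc (0 : ℝ) 1, ∃ M : ℝ, ∀ᶠ n in atTop,
      ∑ k ∈ Finset.range (b ^ n),
          |(∫ ω, Y s ω * Y (((k : ℝ) + 1) / (b : ℝ) ^ n) ω ∂P)
            - (∫ ω, Y s ω * Y ((k : ℝ) / (b : ℝ) ^ n) ω ∂P)| ^ p ≤ M :=
  covariance_pth_variation_bounded_general P p hp b Y hGauss hfin
end
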